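/- Fix ρ ∈ (0,1) and define g_ρ : closure(𝔻) → ℝ³ by g_ρ(x,y) = 2( (ρ(x²+y²)−x+y)(ρ(x²+y²)−x−y)/(ρ²(x²+y²)−2ρx+1)², 2(x−ρ(x²+y²))y/(ρ²(x²+y²)−2ρx+1)², 0 ). Then: (i) the denominator ρ²(x²+y²)−2ρx+1 is strictly positive on the closed unit disk; (ii) each component of g_ρ is harmonic in 𝔻; (iii) for every (x,y) ∈ ∂𝔻, g_ρ(x,y) = g̃_ρ(x,y), where g̃_ρ(x,y) = 2( ((x−ρ)²−y²)/((x−ρ)²+y²)², 2(x−ρ)y/((x−ρ)²+y²)², 0 ). In other words, g_ρ is the harmonic extension to 𝔻 of g̃_ρ. -/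

import Mathlib

noncomputable section

open Metric

/-- Partial derivative in the `x` direction of a scalar function, identifying `ℝ²` with `ℂ`
via `z = x + iy`. -/
def px (f : ℂ → ℝ) (z : ℂ) : ℝ := fderiv ℝ f z 1

/-- Partial derivative in the `y` direction. -/
def py (f : ℂ → ℝ) (z : ℂ) : ℝ := fderiv ℝ f z Complex.I

/-- `f` is harmonic on `s`: it is `C²` there and its Laplacian vanishes on `s`. -/
def HarmonicOnSet (f : ℂ → ℝ) (s : Set ℂ) : Prop :=
  ContDiffOn ℝ 2 f s ∧ ∀ z ∈ s, px (px f) z + py (py f) z = 0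

/-- The denominator `ρ²(x²+y²) − 2ρx + 1`. -/
def denRho (ρ : ℝ) (z : ℂ) : ℝ := ρ ^ 2 * (z.re ^ 2 + z.im ^ 2) - 2 * ρ * z.re + 1

/-- First component of `g_ρ`. -/
def gRho1 (ρ : ℝ) (z : ℂ) : ℝ :=
  2 * ((ρ * (z.re ^ 2 + z.im ^ 2) - z.re + z.im) * (ρ * (z.re ^ 2 + z.im ^ 2) - z.re - z.im) /
    (denRho ρ z) ^ 2)

/-- Second component of `g_ρ`. -/
def gRho2 (ρ : ℝ) (z : ℂ) : ℝ :=
  2 * (2 * (z.re - ρ * (z.re ^ 2 + z.im ^ 2)) * z.im / (denRho ρ z) ^ 2)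

/-!
On `ℝ² = ℂ`, `g_ρ = (Re F, Im F, 0)` for the rational function `F z = 2 z² / (ρ z - 1)²`, whose
only pole `1/ρ` lies outside the closed disk. Real and imaginary parts of a holomorphic function
are harmonic, and on the unit circle `x² + y² = 1` turns the denominator `|ρ z - 1|²` into
`(x - ρ)² + y²`.
-/

open InnerProductSpace Laplacian Complex

lemma px_px_add_py_py_eq_laplacian {f : ℂ → ℝ} {z : ℂ} (hf : ContDiffAt ℝ 2 f z) :
    px (px f) z + py (py f) z = Δ f z := by
  have hdiff : DifferentiableAt ℝ (fderiv ℝ f) z :=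
    (hf.fderiv_right (m := 1) le_rfl).differentiableAt one_ne_zero
  unfold px py
  simp only [laplacian_eq_iteratedFDeriv_complexPlane, iteratedFDeriv_two_apply,
    fderiv_clm_apply hdiff (differentiableAt_const _)]
  simp

theorem InnerProductSpace.HarmonicOnNhd.harmonicOnSet {f : ℂ → ℝ} {s : Set ℂ}
    (h : HarmonicOnNhd f s) : HarmonicOnSet f s :=
  ⟨h.contDiffOn, fun z hz => (px_px_add_py_py_eq_laplacian (h z hz).1).trans (h z hz).2.eq_of_nhds⟩

lemma denRho_eq_normSq (ρ : ℝ) (z : ℂ) : denRho ρ z = normSq (ρ * z - 1) := by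
  simp only [denRho, normSq_apply, sub_re, sub_im, mul_re, mul_im, ofReal_re, ofReal_im, one_re,
    one_im]
  ring

lemma ofReal_mul_sub_one_ne_zero {ρ : ℝ} (hρ : |ρ| < 1) {z : ℂ} (hz : ‖z‖ ≤ 1) :
    (ρ * z - 1 : ℂ) ≠ 0 := by
  rw [sub_ne_zero]
  refine ne_of_apply_ne norm (ne_of_lt ?_)
  rw [norm_mul, norm_real, Real.norm_eq_abs, norm_one]
  nlinarith [abs_nonneg ρ, norm_nonneg z]

lemma denRho_pos {ρ : ℝ} (hρ : |ρ| < 1) {z : ℂ} (hz : ‖z‖ ≤ 1) : 0 < denRho ρ z := by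
  rw [denRho_eq_normSq]
  exact normSq_pos.2 (ofReal_mul_sub_one_ne_zero hρ hz)

def gRhoComplex (ρ : ℝ) (z : ℂ) : ℂ := 2 * z ^ 2 / (ρ * z - 1) ^ 2

lemma gRhoComplex_eq {ρ : ℝ} {z : ℂ} (h : (ρ * z - 1 : ℂ) ≠ 0) :
    gRhoComplex ρ z = gRho1 ρ z + gRho2 ρ z * I := by
  have hd : (denRho ρ z : ℂ) ≠ 0 := by
    rw [denRho_eq_normSq, ofReal_ne_zero]
    exact (normSq_pos.2 h).ne'
  rw [gRhoComplex, gRho1, gRho2, div_eq_iff (pow_ne_zero 2 h)]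
  push_cast
  field_simp
  apply Complex.ext <;>
    simp only [pow_two, denRho, ofReal_add, ofReal_sub, ofReal_mul, ofReal_ofNat, ofReal_one,
      mul_re, mul_im, add_re, add_im, sub_re, sub_im, ofReal_re, ofReal_im, re_ofNat, im_ofNat,
      one_re, one_im, I_re, I_im] <;>
    ring

lemma analyticAt_gRhoComplex {ρ : ℝ} {z : ℂ} (h : (ρ * z - 1 : ℂ) ≠ 0) :
    AnalyticAt ℂ (gRhoComplex ρ) z := by
  unfold gRhoComplex
  fun_prop (disch := exact pow_ne_zero 2 h)

lemma gRhoComplex_eventuallyEq {ρ : ℝ} {z : ℂ} (h : (ρ * z - 1 : ℂ) ≠ 0) :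
    gRhoComplex ρ =ᶠ[nhds z] fun w => gRho1 ρ w + gRho2 ρ w * I := by
  have hcont : Continuous fun w : ℂ => (ρ * w - 1 : ℂ) := by fun_prop
  filter_upwards [hcont.continuousAt.eventually_ne h] with w hw using gRhoComplex_eq hw

lemma harmonicAt_gRho1 {ρ : ℝ} {z : ℂ} (h : (ρ * z - 1 : ℂ) ≠ 0) : HarmonicAt (gRho1 ρ) z := by
  refine (harmonicAt_congr_nhds ?_).1 (analyticAt_gRhoComplex h).harmonicAt_re
  filter_upwards [gRhoComplex_eventuallyEq h] with w hw
  simp [hw]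

lemma harmonicAt_gRho2 {ρ : ℝ} {z : ℂ} (h : (ρ * z - 1 : ℂ) ≠ 0) : HarmonicAt (gRho2 ρ) z := by
  refine (harmonicAt_congr_nhds ?_).1 (analyticAt_gRhoComplex h).harmonicAt_im
  filter_upwards [gRhoComplex_eventuallyEq h] with w hw
  simp [hw]

lemma re_sq_add_im_sq_of_norm_eq_one {z : ℂ} (hz : ‖z‖ = 1) : z.re ^ 2 + z.im ^ 2 = 1 := by
  simpa [normSq_apply, ← pow_two, hz] using normSq_eq_norm_sq z

lemma denRho_of_norm_eq_one (ρ : ℝ) {z : ℂ} (hz : ‖z‖ = 1) :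
    denRho ρ z = (z.re - ρ) ^ 2 + z.im ^ 2 := by
  rw [denRho]
  linear_combination (ρ ^ 2 - 1) * re_sq_add_im_sq_of_norm_eq_one hz

/-- `g_ρ` has positive denominator on the closed unit disk, each of its components (including
the constant third component `0`) is harmonic in the open unit disk, and on the unit circle
it coincides with `g̃_ρ`; i.e. `g_ρ` is the harmonic extension of `g̃_ρ` to the disk. -/
theorem g_rho_harmonic_extension (ρ : ℝ) (hρ : ρ ∈ Set.Ioo (0 : ℝ) 1) :
    (∀ z ∈ closedBall (0 : ℂ) 1, 0 < denRho ρ z) ∧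
    HarmonicOnSet (gRho1 ρ) (ball (0 : ℂ) 1) ∧
    HarmonicOnSet (gRho2 ρ) (ball (0 : ℂ) 1) ∧
    HarmonicOnSet (fun _ => (0 : ℝ)) (ball (0 : ℂ) 1) ∧
    (∀ z ∈ sphere (0 : ℂ) 1,
      gRho1 ρ z = 2 * (((z.re - ρ) ^ 2 - z.im ^ 2) / ((z.re - ρ) ^ 2 + z.im ^ 2) ^ 2) ∧
      gRho2 ρ z = 2 * (2 * (z.re - ρ) * z.im / ((z.re - ρ) ^ 2 + z.im ^ 2) ^ 2)) := by
  have hρ_abs : |ρ| < 1 := abs_lt.2 ⟨by linarith [hρ.1], hρ.2⟩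
  have hpole : ∀ z ∈ ball (0 : ℂ) 1, (ρ * z - 1 : ℂ) ≠ 0 := fun z hz =>
    ofReal_mul_sub_one_ne_zero hρ_abs (mem_ball_zero_iff.1 hz).le
  refine ⟨fun z hz => denRho_pos hρ_abs (mem_closedBall_zero_iff.1 hz),
    HarmonicOnNhd.harmonicOnSet fun z hz => harmonicAt_gRho1 (hpole z hz),
    HarmonicOnNhd.harmonicOnSet fun z hz => harmonicAt_gRho2 (hpole z hz),
    (harmonicOnNhd_const 0).harmonicOnSet, fun z hz => ?_⟩
  have hz : ‖z‖ = 1 := mem_sphere_zero_iff_norm.1 hz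
  rw [gRho1, gRho2, denRho_of_norm_eq_one ρ hz, re_sq_add_im_sq_of_norm_eq_one hz]
  constructor <;> ring
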